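/- arXiv:2101.02472 — 11 statements merged into one kernel-verified Lean document; each statement's English description precedes it below -/
import Mathlib

section
/- The Refinement rule is sound: if a relation r satisfies the key set 𝒳 ∪ {X ∪ Y}, then r satisfies the key set 𝒳 ∪ {X, Y}. -/
open scoped Classical

/-- A tuple `t` is `X`-total: no null marker (`none`) on any attribute of `X`. -/
def KeyTotal {α V : Type*} (t : α → Option V) (X : Set α) : Prop :=
  ∀ A ∈ X, t A ≠ none

/-- A relation `r` (set of tuples mapping attributes to `Option V`, `none` = ⊥)
satisfies a key set `K` (collection of subsets of the schema) iff for all distinct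
tuples there is a key on which both are total and differ. -/
def SatKS {α V : Type*} (r : Set (α → Option V)) (K : Set (Set α)) : Prop :=
  ∀ t ∈ r, ∀ t' ∈ r, t ≠ t' →
    ∃ X ∈ K, KeyTotal t X ∧ KeyTotal t' X ∧ ∃ A ∈ X, t A ≠ t' A

/-- soundness of Refinement. -/
theorem refinement_sound {α V : Type*} (r : Set (α → Option V)) (𝒳 : Set (Set α))
    (X Y : Set α) (h : SatKS r (𝒳 ∪ {X ∪ Y})) :
    SatKS r (𝒳 ∪ {X, Y}) := by
  intro t ht t' ht' hne
  obtain ⟨Z, hZ, htZ, ht'Z, A, hA, hAne⟩ := h t ht t' ht' hne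
  rcases hZ with hZ | hZ
  · exact ⟨Z, Or.inl hZ, htZ, ht'Z, A, hA, hAne⟩
  · rcases hZ with rfl
    rcases hA with hA | hA
    · exact ⟨X, Or.inr (Or.inl rfl),
        fun B hB => htZ B (Or.inl hB), fun B hB => ht'Z B (Or.inl hB), A, hA, hAne⟩
    · exact ⟨Y, Or.inr (Or.inr rfl),
        fun B hB => htZ B (Or.inr hB), fun B hB => ht'Z B (Or.inr hB), A, hA, hAne⟩
end

section
/- The binary Composition rule is sound: suppose a relation r satisfies key sets 𝒳₁ and 𝒳₂, and for each pair (X₁,X₂) ∈ 𝒳₁ × 𝒳₂ a set Z_{(X₁,X₂)} is chosen with Z_{(X₁,X₂)} ⊆ X₁ ∪ X₂ and (X₁ ⊆ Z_{(X₁,X₂)} or X₂ ⊆ Z_{(X₁,X₂)}). Then r satisfies the key set {Z_{(X₁,X₂)} | (X₁,X₂) ∈ 𝒳₁ × 𝒳₂}. -/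
open scoped Classical

/-- soundness of binary Composition. -/
theorem binary_composition_sound {α V : Type*} (r : Set (α → Option V))
    (𝒳₁ 𝒳₂ : Set (Set α)) (Z : Set α → Set α → Set α)
    (hZ : ∀ X₁ ∈ 𝒳₁, ∀ X₂ ∈ 𝒳₂,
      Z X₁ X₂ ⊆ X₁ ∪ X₂ ∧ (X₁ ⊆ Z X₁ X₂ ∨ X₂ ⊆ Z X₁ X₂))
    (h1 : SatKS r 𝒳₁) (h2 : SatKS r 𝒳₂) :
    SatKS r {W | ∃ X₁ ∈ 𝒳₁, ∃ X₂ ∈ 𝒳₂, W = Z X₁ X₂} := by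
  intro t ht t' ht' hne
  obtain ⟨X₁, hX₁, ht1, ht1', A₁, hA₁, hd₁⟩ := h1 t ht t' ht' hne
  obtain ⟨X₂, hX₂, ht2, ht2', A₂, hA₂, hd₂⟩ := h2 t ht t' ht' hne
  obtain ⟨hsub, hor⟩ := hZ X₁ hX₁ X₂ hX₂
  refine ⟨Z X₁ X₂, ⟨X₁, hX₁, X₂, hX₂, rfl⟩, ?_, ?_, ?_⟩
  · intro A hA; rcases hsub hA with h | h
    · exact ht1 A h
    · exact ht2 A h
  · intro A hA; rcases hsub hA with h | h
    · exact ht1' A h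
    · exact ht2' A h
  · rcases hor with h | h
    · exact ⟨A₁, h hA₁, hd₁⟩
    · exact ⟨A₂, h hA₂, hd₂⟩
end

section
/- The n-ary Composition rule is sound: if a relation r satisfies key sets 𝒳₁,…,𝒳ₙ, and for each tuple (X₁,…,Xₙ) ∈ 𝒳₁ × ⋯ × 𝒳ₙ a set Z is chosen with Z ⊆ X₁ ∪ ⋯ ∪ Xₙ and Xᵢ ⊆ Z for some i, then r satisfies the key set consisting of all chosen sets Z. -/
open scoped Classical

/-- soundness of n-ary Composition. -/
theorem nary_composition_sound {α V : Type*} {n : ℕ} (hn : 0 < n)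
    (r : Set (α → Option V)) (𝒳 : Fin n → Set (Set α))
    (hX : ∀ i, (𝒳 i).Nonempty)
    (Z : (Fin n → Set α) → Set α)
    (hZ : ∀ f : Fin n → Set α, (∀ i, f i ∈ 𝒳 i) →
      Z f ⊆ (⋃ i, f i) ∧ ∃ i, f i ⊆ Z f)
    (hr : ∀ i, SatKS r (𝒳 i)) :
    SatKS r {W | ∃ f : Fin n → Set α, (∀ i, f i ∈ 𝒳 i) ∧ W = Z f} := by
  intro t ht t' ht' hne
  choose g hg1 hgt hgt' hA using fun i => hr i t ht t' ht' hne
  have hgmem : ∀ i, g i ∈ 𝒳 i := hg1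
  obtain ⟨hsub, i, hi⟩ := hZ g hgmem
  refine ⟨Z g, ⟨g, hgmem, rfl⟩, ?_, ?_, ?_⟩
  · intro A hAZ
    obtain ⟨_, ⟨j, rfl⟩, hAj⟩ := hsub hAZ
    exact hgt j A hAj
  · intro A hAZ
    obtain ⟨_, ⟨j, rfl⟩, hAj⟩ := hsub hAZ
    exact hgt' j A hAj
  · obtain ⟨A, hAmem, hAne⟩ := hA i
    exact ⟨A, hi hAmem, hAne⟩
end

section
/- (Characterization of key set implication, Lemma A.) A finite set {𝒳₁,…,𝒳ₙ} of key sets implies a key set 𝒴 if and only if for every choice (X₁,…,Xₙ) ∈ 𝒳₁ × ⋯ × 𝒳ₙ there exists 𝒵 ⊆ 𝒴 such that ⋃𝒵 ⊆ ⋃ᵢXᵢ and Xᵢ ⊆ ⋃𝒵 for some i. -/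
open scoped Classical

/-- characterization of key-set implication (Lemma A). -/
theorem keyset_implication_characterization {α V : Type*} [Fintype α]
    (hV : ∃ a b : V, a ≠ b) {n : ℕ} (hn : 0 < n)
    (𝒳 : Fin n → Set (Set α)) (𝒴 : Set (Set α))
    (hX : ∀ i, (𝒳 i).Finite ∧ (𝒳 i).Nonempty)
    (hY : 𝒴.Finite ∧ 𝒴.Nonempty) :
    (∀ r : Set (α → Option V), (∀ i, SatKS r (𝒳 i)) → SatKS r 𝒴) ↔
    (∀ f : Fin n → Set α, (∀ i, f i ∈ 𝒳 i) →
      ∃ 𝒵 ⊆ 𝒴, (⋃₀ 𝒵 ⊆ ⋃ i, f i) ∧ ∃ i, f i ⊆ ⋃₀ 𝒵) := by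
  obtain ⟨a, b, hab⟩ := hV
  constructor
  · -- forward: contrapositive construction
    intro h f hf
    by_contra hcon
    push_neg at hcon
    set U : Set α := ⋃ i, f i with hU
    set 𝒞 : Set (Set α) := {Y | Y ∈ 𝒴 ∧ Y ⊆ U} with h𝒞
    set W : Set α := ⋃₀ 𝒞 with hW
    have hWsub : W ⊆ U := by
      rintro A ⟨Y, hY, hA⟩
      exact hY.2 hA
    have hnf : ∀ i, ∃ A, A ∈ f i ∧ A ∉ W := by
      intro i
      have := hcon 𝒞 (fun Y hY => hY.1) hWsub i
      exact Set.not_subset.mp this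
    choose g hg1 hg2 using hnf
    -- the two tuples
    set t : α → Option V := fun A => if A ∈ U then some a else none with ht
    set t' : α → Option V := fun A => if A ∈ W then some a else if A ∈ U then some b else none with ht'
    have hfU : ∀ i, f i ⊆ U := fun i => Set.subset_iUnion f i
    have htval : ∀ A ∈ U, t A = some a := fun A hA => if_pos hA
    have ht'W : ∀ A ∈ W, t' A = some a := fun A hA => if_pos hA
    have ht'b : ∀ A, A ∈ U → A ∉ W → t' A = some b := by
      intro A hA hA'
      simp only [ht', if_neg hA', if_pos hA]
    have htne : t ≠ t' := by
      intro heq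
      have i0 : Fin n := ⟨0, hn⟩
      have h1 : t (g i0) = some a := htval _ (hfU i0 (hg1 i0))
      have h2 : t' (g i0) = some b := ht'b _ (hfU i0 (hg1 i0)) (hg2 i0)
      rw [heq, h2] at h1
      exact hab (Option.some_injective V h1.symm)
    set r : Set (α → Option V) := {t, t'} with hr
    have hsat : ∀ i, SatKS r (𝒳 i) := by
      intro i s hs s' hs' hne
      refine ⟨f i, hf i, ?_, ?_, g i, hg1 i, ?_⟩
      · intro A hA
        rcases hs with rfl | rfl
        · rw [htval A (hfU i hA)]; exact fun hc => by cases hc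
        · by_cases hAW : A ∈ W
          · rw [ht'W A hAW]; exact fun hc => by cases hc
          · rw [ht'b A (hfU i hA) hAW]; exact fun hc => by cases hc
      · intro A hA
        rcases hs' with rfl | rfl
        · rw [htval A (hfU i hA)]; exact fun hc => by cases hc
        · by_cases hAW : A ∈ W
          · rw [ht'W A hAW]; exact fun hc => by cases hc
          · rw [ht'b A (hfU i hA) hAW]; exact fun hc => by cases hc
      · have h1 : t (g i) = some a := htval _ (hfU i (hg1 i))
        have h2 : t' (g i) = some b := ht'b _ (hfU i (hg1 i)) (hg2 i)
        rcases hs with rfl | rfl <;> rcases hs' with rfl | rfl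
        · exact absurd rfl hne
        · rw [h1, h2]; exact fun hc => hab (Option.some_injective V hc)
        · rw [h1, h2]; exact fun hc => hab (Option.some_injective V hc).symm
        · exact absurd rfl hne
    have hYsat := h r hsat t (Or.inl rfl) t' (Or.inr rfl) htne
    obtain ⟨Y, hY𝒴, htot, htot', A, hAY, hAne⟩ := hYsat
    have hYU : Y ⊆ U := by
      intro B hB
      by_contra hBU
      exact htot B hB (if_neg hBU)
    have hYW : Y ⊆ W := fun B hB => ⟨Y, ⟨hY𝒴, hYU⟩, hB⟩
    have : t A = t' A := by
      rw [htval A (hYU hAY), ht'W A (hYW hAY)]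
    exact hAne this
  · -- backward
    intro h r hr t ht t' ht' htne
    have hex : ∀ i, ∃ X, X ∈ 𝒳 i ∧ KeyTotal t X ∧ KeyTotal t' X ∧ ∃ A ∈ X, t A ≠ t' A := by
      intro i
      obtain ⟨X, hX1, hX2⟩ := hr i t ht t' ht' htne
      exact ⟨X, hX1, hX2⟩
    choose f hf1 hf2 hf3 hf4 using hex
    obtain ⟨𝒵, h𝒵Y, h𝒵sub, i, hfi⟩ := h f hf1
    obtain ⟨A, hA, hAne⟩ := hf4 i
    obtain ⟨Z, hZ𝒵, hAZ⟩ := hfi hA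
    have htotZ : ∀ (s : α → Option V), (∀ j, KeyTotal s (f j)) → KeyTotal s Z := by
      intro s hs B hB
      have : B ∈ ⋃ j, f j := h𝒵sub ⟨Z, hZ𝒵, hB⟩
      obtain ⟨j, hj⟩ := Set.mem_iUnion.mp this
      exact hs j B hj
    exact ⟨Z, h𝒵Y hZ𝒵, htotZ t hf2, htotZ t' hf3, A, hAZ, hAne⟩
end

section
/- If {𝒳₁,…,𝒳ₙ} does not imply 𝒴, then there is a witnessing relation consisting of just two tuples: i.e., there exist two tuples t,t' over R such that the relation {t,t'} satisfies every 𝒳ᵢ but does not satisfy 𝒴. -/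
open scoped Classical

/-- non-implication has a two-tuple witness. -/
theorem two_tuple_witness {α V : Type*} [Fintype α] (hV : ∃ a b : V, a ≠ b)
    {n : ℕ} (𝒳 : Fin n → Set (Set α)) (𝒴 : Set (Set α))
    (h : ¬ ∀ r : Set (α → Option V), (∀ i, SatKS r (𝒳 i)) → SatKS r 𝒴) :
    ∃ t t' : α → Option V, t ≠ t' ∧
      (∀ i, SatKS {t, t'} (𝒳 i)) ∧ ¬ SatKS {t, t'} 𝒴 := by
  push_neg at h
  obtain ⟨r, hr, hns⟩ := h
  unfold SatKS at hns
  push_neg at hns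
  obtain ⟨t, ht, t', ht', hne, hno⟩ := hns
  refine ⟨t, t', hne, ?_, ?_⟩
  · intro i u hu v hv huv
    rcases hu with rfl | rfl <;> rcases hv with rfl | rfl <;>
      first
        | exact absurd rfl huv
        | exact hr i _ ht _ ht' huv
        | exact hr i _ ht' _ ht huv
  · intro hs
    obtain ⟨X, hX, h1, h2, A, hA, hAne⟩ :=
      hs t (Set.mem_insert _ _) t' (Set.mem_insert_of_mem _ rfl) hne
    exact hAne (hno X hX h1 h2 A hA)
end

section
/- (Completeness direction of Lemma A, model construction.) Suppose there exists (X₁,…,Xₙ) ∈ 𝒳₁ × ⋯ × 𝒳ₙ such that, setting 𝒵 = {Z ∈ 𝒴 | Z ⊆ ⋃ᵢXᵢ}, we have Xᵢ ⊄ ⋃𝒵 for all i. Pick Aᵢ ∈ Xᵢ \ ⋃𝒵 for each i. Define tuple t mapping all of R to 0, and tuple t' mapping each Aᵢ to 1, all attributes of ⋃ᵢXᵢ not among the Aᵢ to 0, and all remaining attributes of R to ⊥. Then the relation {t,t'} satisfies every 𝒳ⱼ and violates 𝒴. -/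
open scoped Classical

/-- explicit counterexample construction of Lemma A. -/
theorem lemmaA_model_construction {α : Type*} [Fintype α] {n : ℕ} (hn : 0 < n)
    (𝒳 : Fin n → Set (Set α)) (𝒴 : Set (Set α))
    (f : Fin n → Set α) (hf : ∀ i, f i ∈ 𝒳 i)
    (hnotsub : ∀ i, ¬ f i ⊆ ⋃₀ {Z ∈ 𝒴 | Z ⊆ ⋃ j, f j})
    (A : Fin n → α)
    (hA : ∀ i, A i ∈ f i \ ⋃₀ {Z ∈ 𝒴 | Z ⊆ ⋃ j, f j})
    (t t' : α → Option (Fin 2))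
    (ht : t = fun _ => some 0)
    (ht' : t' = fun B => if ∃ i, B = A i then some 1
        else if B ∈ ⋃ j, f j then some 0 else none) :
    (∀ j, SatKS {t, t'} (𝒳 j)) ∧ ¬ SatKS {t, t'} 𝒴 := by
  subst ht ht'
  set i0 : Fin n := ⟨0, hn⟩
  have htA : ∀ i : Fin n,
      (fun B => if ∃ i, B = A i then some 1
        else if B ∈ ⋃ j, f j then (some 0 : Option (Fin 2)) else none) (A i) = some 1 := by
    intro i; simp
  have hne : (fun _ => (some 0 : Option (Fin 2))) ≠
      (fun B => if ∃ i, B = A i then some 1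
        else if B ∈ ⋃ j, f j then some 0 else none) := by
    intro h
    have := congrFun h (A i0)
    rw [if_pos (⟨i0, rfl⟩ : ∃ i, A i0 = A i)] at this
    exact (by simp : (some (0:Fin 2)) ≠ some 1) this
  constructor
  · intro j s hs s' hs' hss
    refine ⟨f j, hf j, ?_, ?_, A j, (hA j).1, ?_⟩
    · intro B hB
      rcases hs with rfl | rfl
      · simp
      · simp only []
        split
        · simp
        · rw [if_pos (Set.mem_iUnion.2 ⟨j, hB⟩)]; simp
    · intro B hB
      rcases hs' with rfl | rfl
      · simp
      · simp only []
        split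
        · simp
        · rw [if_pos (Set.mem_iUnion.2 ⟨j, hB⟩)]; simp
    · rcases hs with rfl | rfl <;> rcases hs' with rfl | rfl
      · exact absurd rfl hss
      · simp only [htA]; simp
      · simp only [htA]; simp
      · exact absurd rfl hss
  · intro hsat
    obtain ⟨Z, hZ, htot, htot', B, hB, hdiff⟩ :=
      hsat _ (Set.mem_insert _ _) _ (Set.mem_insert_of_mem _ rfl) hne
    have hZsub : Z ⊆ ⋃ j, f j := by
      intro C hC
      have := htot' C hC
      by_contra hCnot
      simp only [hCnot, if_false] at this
      split at this
      · rename_i h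
        obtain ⟨i, rfl⟩ := h
        exact hCnot (Set.mem_iUnion.2 ⟨i, (hA i).1⟩)
      · exact this rfl
    have hZmem : Z ∈ {Z ∈ 𝒴 | Z ⊆ ⋃ j, f j} := ⟨hZ, hZsub⟩
    split at hdiff
    · rename_i h
      obtain ⟨i, rfl⟩ := h
      exact (hA i).2 ⟨Z, hZmem, hB⟩
    · rw [if_pos (hZsub hB)] at hdiff
      exact hdiff rfl
end

section
/- (Implication of unary key sets.) Let Σ = {𝒳₁,…,𝒳ₙ} be key sets and φ = {{A₁},…,{A_k}} a unary key set over R. Then Σ implies φ if and only if there exists i with ⋃𝒳ᵢ ⊆ {A₁,…,A_k}. -/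
open scoped Classical

/-- implication of a unary key set by arbitrary key sets. -/
theorem unary_implication_characterization {α : Type*} [Fintype α] [Nonempty α]
    {n : ℕ} (hn : 0 < n) (𝒳 : Fin n → Set (Set α))
    (hX : ∀ i, (𝒳 i).Nonempty) (X : Set α) :
    (∀ r : Set (α → Option ℕ), (∀ i, SatKS r (𝒳 i)) →
      SatKS r {Y | ∃ A ∈ X, Y = ({A} : Set α)}) ↔
    ∃ i, ⋃₀ (𝒳 i) ⊆ X := by
  constructor
  · intro h
    by_contra hc
    push_neg at hc
    have hsel : ∀ i, ∃ Y ∈ 𝒳 i, ∃ a ∈ Y, a ∉ X := by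
      intro i
      obtain ⟨a, ha, hax⟩ := Set.not_subset.mp (hc i)
      obtain ⟨Yi, hYi, haY⟩ := ha
      exact ⟨Yi, hYi, a, haY, hax⟩
    choose Y hY A hAY hAX using hsel
    set t : α → Option ℕ := fun _ => some 0 with ht
    set t' : α → Option ℕ := fun a => if a ∈ X then some 0 else some 1 with ht'
    have hne : ∀ i, t (A i) ≠ t' (A i) := by
      intro i
      simp [ht, ht', hAX i]
    have htt' : t ≠ t' := fun he => hne ⟨0, hn⟩ (congrFun he _)
    have hsat : ∀ i, SatKS {t, t'} (𝒳 i) := by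
      intro i s hs s' hs' hss'
      simp only [Set.mem_insert_iff, Set.mem_singleton_iff] at hs hs'
      refine ⟨Y i, hY i, ?_, ?_, A i, hAY i, ?_⟩
      · intro a _
        rcases hs with rfl | rfl
        · simp [ht]
        · simp only [ht']; split <;> simp
      · intro a _
        rcases hs' with rfl | rfl
        · simp [ht]
        · simp only [ht']; split <;> simp
      · rcases hs with rfl | rfl <;> rcases hs' with rfl | rfl
        · exact absurd rfl hss'
        · exact hne i
        · exact (hne i).symm
        · exact absurd rfl hss'
    obtain ⟨K, ⟨a, haX, rfl⟩, _, _, b, hb, hbne⟩ :=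
      h {t, t'} hsat t (by simp) t' (by simp) htt'
    rw [Set.mem_singleton_iff] at hb
    subst hb
    exact hbne (by simp [ht, ht', haX])
  · rintro ⟨i, hi⟩ r hr s hs s' hs' hss'
    obtain ⟨K, hK, hKt, hKt', a, haK, hane⟩ := hr i s hs s' hs' hss'
    refine ⟨{a}, ⟨a, hi ⟨K, hK, haK⟩, rfl⟩, ?_, ?_, a, rfl, hane⟩
    · intro b hb; rw [Set.mem_singleton_iff] at hb; subst hb; exact hKt _ haK
    · intro b hb; rw [Set.mem_singleton_iff] at hb; subst hb; exact hKt' _ haK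
end

section
/- (Counterexample construction for unary implication.) Let X ⊆ R and suppose ⋃𝒳ᵢ ⊄ X for all i = 1,…,n. Let t,t' be two total (null-free) tuples agreeing exactly on the attributes in X and disagreeing on all attributes of R \ X. Then the relation {t,t'} satisfies each 𝒳ᵢ but violates the unary key set {{A} | A ∈ X}. -/
open scoped Classical

/-- two total tuples agreeing exactly on X witness non-implication
of the unary key set on X. -/
theorem unary_counterexample {α V : Type*} {n : ℕ} (hn : 0 < n)
    (𝒳 : Fin n → Set (Set α)) (X : Set α)
    (hsub : ∀ i, ¬ ⋃₀ (𝒳 i) ⊆ X)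
    (t t' : α → Option V)
    (htot : ∀ A, t A ≠ none) (htot' : ∀ A, t' A ≠ none)
    (hagree : ∀ A ∈ X, t A = t' A) (hdis : ∀ A ∉ X, t A ≠ t' A) :
    t ≠ t' ∧ (∀ i, SatKS {t, t'} (𝒳 i)) ∧
      ¬ SatKS {t, t'} {Y | ∃ A ∈ X, Y = ({A} : Set α)} := by
  -- pick a witness attribute outside X
  obtain ⟨A0, hA0, hA0X⟩ := Set.not_subset.mp (hsub ⟨0, hn⟩)
  have hne : t ≠ t' := fun h => hdis A0 hA0X (congrFun h A0)
  refine ⟨hne, ?_, ?_⟩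
  · intro i
    obtain ⟨A, hA, hAX⟩ := Set.not_subset.mp (hsub i)
    obtain ⟨Y, hY, hAY⟩ := hA
    intro s hs s' hs' hss
    have htotAll : ∀ u ∈ ({t, t'} : Set (α → Option V)), ∀ B, u B ≠ none := by
      rintro u (rfl | rfl) B
      exacts [htot B, htot' B]
    refine ⟨Y, hY, fun B _ => htotAll s hs B, fun B _ => htotAll s' hs' B, A, hAY, ?_⟩
    rcases hs with rfl | rfl <;> rcases hs' with rfl | rfl <;>
      first | exact absurd rfl hss | exact hdis A hAX | exact fun h => hdis A hAX h.symm
  · intro h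
    obtain ⟨Y, ⟨A, hAX, rfl⟩, _, _, B, hB, hdiff⟩ :=
      h t (Or.inl rfl) t' (Or.inr rfl) hne
    exact hdiff (hB ▸ hagree A hAX)
end

section
/- A unary key set φ = {{A₁},…,{A_k}} is satisfied by a relation r if and only if for every pair of distinct tuples t,t' ∈ r there is some j with t(A_j) ≠ ⊥, t'(A_j) ≠ ⊥, and t(A_j) ≠ t'(A_j). In particular, satisfaction of a unary key set coincides with satisfaction of the certain key on {A₁,…,A_k}: in every possible world obtained by replacing each ⊥ independently by a domain value distinct from all values occurring in r, distinct tuples differ on some A_j. -/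
open scoped Classical

/-- unary key sets and certain keys coincide. A possible world is
given by a completion `c` replacing each null independently by a domain value. -/
theorem unary_keyset_eq_certain_key {α V : Type*} [Infinite V]
    (r : Set (α → Option V)) (hr : r.Finite) (X : Set α) :
    (SatKS r {Y | ∃ A ∈ X, Y = ({A} : Set α)} ↔
      ∀ t ∈ r, ∀ t' ∈ r, t ≠ t' →
        ∃ A ∈ X, t A ≠ none ∧ t' A ≠ none ∧ t A ≠ t' A) ∧
    (SatKS r {Y | ∃ A ∈ X, Y = ({A} : Set α)} ↔
      ∀ c : (α → Option V) → (α → V),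
        (∀ t A v, t A = some v → c t A = v) →
        ∀ t ∈ r, ∀ t' ∈ r, t ≠ t' → ∃ A ∈ X, c t A ≠ c t' A) := by
  obtain ⟨d⟩ : Nonempty V := inferInstance
  have h1 : SatKS r {Y | ∃ A ∈ X, Y = ({A} : Set α)} ↔
      ∀ t ∈ r, ∀ t' ∈ r, t ≠ t' →
        ∃ A ∈ X, t A ≠ none ∧ t' A ≠ none ∧ t A ≠ t' A := by
    constructor
    · intro h t ht t' ht' hne
      obtain ⟨Y, ⟨A, hA, rfl⟩, hT, hT', B, hB, hBne⟩ := h t ht t' ht' hne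
      rcases hB with rfl
      exact ⟨B, hA, hT B rfl, hT' B rfl, hBne⟩
    · intro h t ht t' ht' hne
      obtain ⟨A, hA, h1, h2, h3⟩ := h t ht t' ht' hne
      refine ⟨{A}, ⟨A, hA, rfl⟩, ?_, ?_, A, rfl, h3⟩ <;>
        · intro B hB; rcases hB with rfl; assumption
  refine ⟨h1, h1.trans ?_⟩
  constructor
  · intro h c hc t ht t' ht' hne
    obtain ⟨A, hA, h1, h2, h3⟩ := h t ht t' ht' hne
    obtain ⟨v, hv⟩ := Option.ne_none_iff_exists'.mp h1
    obtain ⟨w, hw⟩ := Option.ne_none_iff_exists'.mp h2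
    refine ⟨A, hA, ?_⟩
    rw [hc t A v hv, hc t' A w hw]
    intro hvw; exact h3 (by rw [hv, hw, hvw])
  · intro h t ht t' ht' hne
    by_contra hcon
    push_neg at hcon
    set c : (α → Option V) → (α → V) := fun s A =>
      match s A with
      | some v => v
      | none => if s = t then (t' A).getD d else if s = t' then (t A).getD d else d
      with hcdef
    have hc : ∀ s A v, s A = some v → c s A = v := by
      intro s A v hv
      simp [hcdef, hv]
    obtain ⟨A, hA, hne'⟩ := h c hc t ht t' ht' hne
    apply hne'
    have hcon' := hcon A hA
    rcases ht0 : t A with _ | v <;> rcases ht1 : t' A with _ | w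
    · simp [hcdef, ht0, ht1, hne, hne.symm]
    · rw [hc t' A w ht1]; simp [hcdef, ht0, ht1]
    · rw [hc t A v ht0]; simp [hcdef, ht0, ht1, hne.symm]
    · have := hcon' (by simp [ht0]) (by simp [ht1])
      rw [ht0, ht1] at this
      rw [hc t A v ht0, hc t' A w ht1]
      exact Option.some_injective _ this
end

section
/- (No Armstrong relation in general.) Over schema R = {A,B,C,D}, let Σ = {{{A},{B}}, {{C},{D}}}. There is no relation r that satisfies both key sets in Σ, violates σ₁ = {{A,C},{A,D},{B,C}}, and violates σ₂ = {{A,D},{B,C},{B,D}}. Since σ₁ and σ₂ are each not implied by Σ, no Armstrong relation for Σ exists. -/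
open scoped Classical

/-- auxiliary: attribute `i` "works" for pair `t, t'`. -/
def Works {V : Type*} (t t' : Fin 4 → Option V) (i : Fin 4) : Prop :=
  t i ≠ none ∧ t' i ≠ none ∧ t i ≠ t' i

lemma sat_pair {V : Type*} {r : Set (Fin 4 → Option V)} {i j : Fin 4}
    (h : SatKS r ({({i} : Set (Fin 4)), {j}} : Set (Set (Fin 4))))
    {t t' : Fin 4 → Option V} (ht : t ∈ r) (ht' : t' ∈ r) (hne : t ≠ t') :
    Works t t' i ∨ Works t t' j := by
  obtain ⟨X, hX, hT, hT', A, hA, hd⟩ := h t ht t' ht' hne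
  rcases hX with rfl | hX
  · left
    have hAi : A = i := hA
    subst hAi
    exact ⟨hT A rfl, hT' A rfl, hd⟩
  · right
    have : X = {j} := hX
    subst this
    have hAj : A = j := hA
    subst hAj
    exact ⟨hT A rfl, hT' A rfl, hd⟩

lemma works_pair {V : Type*} {t t' : Fin 4 → Option V} {i j : Fin 4}
    (hi : Works t t' i) (hj : Works t t' j) :
    KeyTotal t {i, j} ∧ KeyTotal t' {i, j} ∧ ∃ A ∈ ({i, j} : Set (Fin 4)), t A ≠ t' A := by
  refine ⟨?_, ?_, i, Or.inl rfl, hi.2.2⟩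
  · intro A hA
    rcases hA with rfl | hA
    · exact hi.1
    · have : A = j := hA
      subst this; exact hj.1
  · intro A hA
    rcases hA with rfl | hA
    · exact hi.2.1
    · have : A = j := hA
      subst this; exact hj.2.1

/-- if `j` works but the key `{i,j}` does not, then some tuple is null on `i`. -/
lemma pair_contra {V : Type*} {t t' : Fin 4 → Option V} {X : Set (Fin 4)}
    (h : KeyTotal t X → KeyTotal t' X → ∀ A ∈ X, t A = t' A)
    (hp : KeyTotal t X ∧ KeyTotal t' X ∧ ∃ A ∈ X, t A ≠ t' A) : False := by
  obtain ⟨a, b, A, hA, hd⟩ := hp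
  exact hd (h a b A hA)

lemma null_of_not_pair {V : Type*} {t t' : Fin 4 → Option V} {i j : Fin 4}
    (hj : Works t t' j)
    (h : KeyTotal t {i, j} → KeyTotal t' {i, j} → ∀ A ∈ ({i, j} : Set (Fin 4)), t A = t' A) :
    t i = none ∨ t' i = none := by
  by_contra hc
  push_neg at hc
  apply pair_contra h
  refine ⟨?_, ?_, j, Or.inr rfl, hj.2.2⟩
  · intro A hA
    rcases hA with rfl | hA
    · exact hc.1
    · have : A = j := hA
      subst this; exact hj.1
  · intro A hA
    rcases hA with rfl | hA
    · exact hc.2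
    · have : A = j := hA
      subst this; exact hj.2.1

/-- over R = {A,B,C,D} (as Fin 4, A=0,…,D=3), every relation
satisfying Σ = {{{A},{B}},{{C},{D}}} satisfies σ₁ or σ₂; hence no Armstrong
relation for Σ exists. -/
theorem no_armstrong_relation {V : Type*} (r : Set (Fin 4 → Option V))
    (h1 : SatKS r ({({0} : Set (Fin 4)), {1}} : Set (Set (Fin 4))))
    (h2 : SatKS r ({({2} : Set (Fin 4)), {3}} : Set (Set (Fin 4)))) :
    SatKS r ({({0, 2} : Set (Fin 4)), {0, 3}, {1, 2}} : Set (Set (Fin 4))) ∨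
    SatKS r ({({0, 3} : Set (Fin 4)), {1, 2}, {1, 3}} : Set (Set (Fin 4))) := by
  by_contra hcon
  push_neg at hcon
  obtain ⟨hn1, hn2⟩ := hcon
  rw [SatKS] at hn1 hn2
  push_neg at hn1 hn2
  obtain ⟨t1, ht1, t2, ht2, h12, H1⟩ := hn1
  obtain ⟨t3, ht3, t4, ht4, h34, H2⟩ := hn2
  -- negated witnesses for σ₁ on (t1,t2)
  have n02 := H1 {0, 2} (by left; rfl)
  have n03 := H1 {0, 3} (by right; left; rfl)
  have n12 := H1 {1, 2} (by right; right; rfl)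
  -- negated witnesses for σ₂ on (t3,t4)
  have m03 := H2 {0, 3} (by left; rfl)
  have m12 := H2 {1, 2} (by right; left; rfl)
  have m13 := H2 {1, 3} (by right; right; rfl)
  have hAB := sat_pair h1 ht1 ht2 h12
  have hCD := sat_pair h2 ht1 ht2 h12
  have hAB' := sat_pair h1 ht3 ht4 h34
  have hCD' := sat_pair h2 ht3 ht4 h34
  -- on (t1,t2): B and D work
  have hB : Works t1 t2 1 := by
    rcases hAB with hA | hB
    · rcases hCD with hC | hD
      · exact absurd (works_pair hA hC) (pair_contra n02)
      · exact absurd (works_pair hA hD) (pair_contra n03)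
    · exact hB
  have hD : Works t1 t2 3 := by
    rcases hCD with hC | hD
    · exact absurd (works_pair hB hC) (pair_contra n12)
    · exact hD
  have hu : t1 0 = none ∨ t2 0 = none := null_of_not_pair hD n03
  -- on (t3,t4): A and C work
  have hA' : Works t3 t4 0 := by
    rcases hAB' with hA | hB'
    · exact hA
    · rcases hCD' with hC | hD'
      · exact absurd (works_pair hB' hC) (pair_contra m12)
      · exact absurd (works_pair hB' hD') (pair_contra m13)
  have hC' : Works t3 t4 2 := by
    rcases hCD' with hC | hD'
    · exact hC
    · exact absurd (works_pair hA' hD') (pair_contra m03)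
  have hw : t3 1 = none ∨ t4 1 = none := null_of_not_pair hC' m12
  -- pick u with u 0 = none (and u 1 ≠ none), w with w 1 = none (and w 0 ≠ none)
  obtain ⟨u, hur, hu0, hu1⟩ : ∃ u ∈ r, u 0 = none ∧ u 1 ≠ none := by
    rcases hu with h | h
    · exact ⟨t1, ht1, h, hB.1⟩
    · exact ⟨t2, ht2, h, hB.2.1⟩
  obtain ⟨w, hwr, hw1, hw0⟩ : ∃ w ∈ r, w 1 = none ∧ w 0 ≠ none := by
    rcases hw with h | h
    · exact ⟨t3, ht3, h, hA'.1⟩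
    · exact ⟨t4, ht4, h, hA'.2.1⟩
  have huw : u ≠ w := by
    intro h; exact hw0 (h ▸ hu0)
  rcases sat_pair h1 hur hwr huw with h | h
  · exact h.1 hu0
  · exact h.2.1 hw1
end

section
/- (Disjoint union yields Armstrong relations for unary consequences.) Let Σ = {𝒳₁,…,𝒳ₙ} be key sets over finite schema R. There exists a single finite relation r such that r satisfies every 𝒳ᵢ, and for every unary key set φ = {{A} | A ∈ X} (X ⊆ R): r satisfies φ if and only if Σ implies φ (equivalently, iff ⋃𝒳ᵢ ⊆ X for some i). -/
open scoped Classical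

/-- existence of a finite Armstrong relation for unary consequences. -/
theorem armstrong_for_unary_consequences {α : Type*} [Fintype α] [Nonempty α]
    {n : ℕ} (hn : 0 < n) (𝒳 : Fin n → Set (Set α))
    (hX : ∀ i, (𝒳 i).Finite ∧ (𝒳 i).Nonempty) :
    ∃ r : Set (α → Option ℕ), r.Finite ∧ (∀ i, SatKS r (𝒳 i)) ∧
      ∀ X : Set α,
        (SatKS r {Y | ∃ A ∈ X, Y = ({A} : Set α)} ↔ ∃ i, ⋃₀ (𝒳 i) ⊆ X) := by
  classical
  by_cases hdeg : ∃ i, ⋃₀ (𝒳 i) = (∅ : Set α)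
  · refine ⟨{fun _ => some 0}, Set.finite_singleton _, ?_, ?_⟩
    · intro i t ht t' ht' hne
      exact absurd (ht.trans ht'.symm) hne
    · intro X
      constructor
      · intro _
        obtain ⟨i, hi⟩ := hdeg
        exact ⟨i, by simp [hi]⟩
      · intro _ t ht t' ht' hne
        exact absurd (ht.trans ht'.symm) hne
  · push_neg at hdeg
    obtain ⟨f, hf⟩ := Countable.exists_injective_nat (Set α × α × Bool)
    set S : Fin n → Set α := fun i => ⋃₀ 𝒳 i with hS
    have hSne : ∀ i, (S i).Nonempty := fun i =>
      hdeg i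
    set B : Set (Set α) := {X | ∀ i, ¬ S i ⊆ X} with hB
    set t0 : Set α → α → Option ℕ := fun X A => some (f (X, A, false)) with ht0
    set t1 : Set α → α → Option ℕ :=
      fun X A => if A ∈ X then some (f (X, A, false)) else some (f (X, A, true)) with ht1
    set r : Set (α → Option ℕ) := ⋃ X ∈ B, {t0 X, t1 X} with hr
    -- membership characterization
    have hmem : ∀ t, t ∈ r ↔ ∃ X ∈ B, t = t0 X ∨ t = t1 X := by
      intro t; simp [hr]
    -- tuples are total everywhere
    have htot : ∀ X A, (∃ b : Bool, t0 X A = some (f (X, A, b))) ∧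
        (∃ b : Bool, t1 X A = some (f (X, A, b))) := by
      intro X A
      constructor
      · exact ⟨false, rfl⟩
      · by_cases hA : A ∈ X
        · exact ⟨false, by simp [ht1, hA]⟩
        · exact ⟨true, by simp [ht1, hA]⟩
    have htotal : ∀ t ∈ r, ∀ (Y : Set α), KeyTotal t Y := by
      intro t ht Y A _
      obtain ⟨X, _, h⟩ := (hmem t).1 ht
      rcases h with h | h
      · subst h; simp [ht0]
      · subst h
        obtain ⟨b, hb⟩ := (htot X A).2
        simp [hb]
    -- cross-block difference
    have hcross : ∀ X X' : Set α, X ≠ X' → ∀ t t', (t = t0 X ∨ t = t1 X) →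
        (t' = t0 X' ∨ t' = t1 X') → ∀ A, t A ≠ t' A := by
      intro X X' hXX' t t' ht ht' A
      have h1 : ∃ b : Bool, t A = some (f (X, A, b)) := by
        rcases ht with h | h
        · subst h; exact (htot X A).1
        · subst h; exact (htot X A).2
      have h2 : ∃ b : Bool, t' A = some (f (X', A, b)) := by
        rcases ht' with h | h
        · subst h; exact (htot X' A).1
        · subst h; exact (htot X' A).2
      obtain ⟨b1, hb1⟩ := h1
      obtain ⟨b2, hb2⟩ := h2
      rw [hb1, hb2]
      intro h
      have := hf (Option.some_injective _ h)
      exact hXX' (congrArg Prod.fst this)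
    -- within-block difference off X
    have hdiff : ∀ X : Set α, ∀ A ∉ X, t0 X A ≠ t1 X A := by
      intro X A hA h
      simp only [ht0, ht1, if_neg hA] at h
      have := hf (Option.some_injective _ h)
      simpa using congrArg (fun p => p.2.2) this
    -- within-block agreement on X
    have hagree : ∀ X : Set α, ∀ A ∈ X, t0 X A = t1 X A := by
      intro X A hA
      simp [ht0, ht1, hA]
    have hrfin : r.Finite := by
      apply Set.Finite.biUnion (Set.toFinite B)
      intro X _
      exact (Set.finite_singleton _).insert _
    refine ⟨r, hrfin, ?_, ?_⟩
    · -- r satisfies every 𝒳 i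
      intro i t ht t' ht' hne
      obtain ⟨X, hXB, hX1⟩ := (hmem t).1 ht
      obtain ⟨X', hX'B, hX'1⟩ := (hmem t').1 ht'
      by_cases hXX' : X = X'
      · subst hXX'
        -- same block: must be t0 and t1 (in some order)
        have hnSi : ¬ S i ⊆ X := hXB i
        obtain ⟨A, hAS, hAX⟩ := Set.not_subset.1 hnSi
        obtain ⟨Y, hY𝒳, hAY⟩ := hAS
        refine ⟨Y, hY𝒳, htotal t ht Y, htotal t' ht' Y, A, hAY, ?_⟩
        rcases hX1 with h | h <;> rcases hX'1 with h' | h'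
        · exact absurd (h.trans h'.symm) hne
        · subst h; subst h'; exact hdiff X A hAX
        · subst h; subst h'; exact fun hh => hdiff X A hAX hh.symm
        · exact absurd (h.trans h'.symm) hne
      · obtain ⟨A, hAS⟩ := hSne i
        obtain ⟨Y, hY𝒳, hAY⟩ := hAS
        exact ⟨Y, hY𝒳, htotal t ht Y, htotal t' ht' Y, A, hAY,
          hcross X X' hXX' t t' hX1 hX'1 A⟩
    · intro X
      constructor
      · -- forward: contrapositive
        intro hsat
        by_contra hno
        push_neg at hno
        have hXB : X ∈ B := fun i => hno i
        have ht0r : t0 X ∈ r := (hmem _).2 ⟨X, hXB, Or.inl rfl⟩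
        have ht1r : t1 X ∈ r := (hmem _).2 ⟨X, hXB, Or.inr rfl⟩
        have hne : t0 X ≠ t1 X := by
          obtain ⟨A, hAS, hAX⟩ := Set.not_subset.1 (hXB ⟨0, hn⟩)
          intro h
          exact hdiff X A hAX (congrFun h A)
        obtain ⟨Y, hY, _, _, A, hAY, hAne⟩ := hsat _ ht0r _ ht1r hne
        obtain ⟨A', hA'X, hYA'⟩ := hY
        rw [hYA'] at hAY
        rw [Set.mem_singleton_iff] at hAY
        subst hAY
        exact hAne (hagree X _ hA'X)
      · rintro ⟨i, hi⟩ t ht t' ht' hne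
        obtain ⟨Z, hZB, hZ1⟩ := (hmem t).1 ht
        obtain ⟨Z', hZ'B, hZ'1⟩ := (hmem t').1 ht'
        by_cases hZZ' : Z = Z'
        · subst hZZ'
          obtain ⟨A, hAS, hAZ⟩ := Set.not_subset.1 (hZB i)
          have hAX : A ∈ X := hi hAS
          refine ⟨{A}, ⟨A, hAX, rfl⟩, htotal t ht _, htotal t' ht' _, A, rfl, ?_⟩
          rcases hZ1 with h | h <;> rcases hZ'1 with h' | h'
          · exact absurd (h.trans h'.symm) hne
          · subst h; subst h'; exact hdiff Z A hAZ
          · subst h; subst h'; exact fun hh => hdiff Z A hAZ hh.symm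
          · exact absurd (h.trans h'.symm) hne
        · obtain ⟨A, hAS⟩ := hSne i
          have hAX : A ∈ X := hi hAS
          exact ⟨{A}, ⟨A, hAX, rfl⟩, htotal t ht _, htotal t' ht' _, A, rfl,
            hcross Z Z' hZZ' t t' hZ1 hZ'1 A⟩
end
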